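/- Every wevel is wand-potent and wand-transitive: if s is a wevel, then every x with x ⧏∈ s satisfies x ∈ s, and every a ∈ s satisfies a ⧏ s. -/

import Mathlib

/-- `x` is a subset of `r` (with respect to the membership relation `mem`). -/
def wsSub {M : Type*} (mem : M → M → Prop) (x r : M) : Prop :=
  ∀ y, mem y x → mem y r

/-- `x` is found at `r`:  either `x` is bland and `x ⊆ r`, or some wand-tap of a member
of `r` yields `x`. -/
def wsFoundAt {M : Type*} (Bland : M → Prop) (mem : M → M → Prop)
    (Tap : M → M → M → Prop) (x r : M) : Prop :=
  (Bland x ∧ wsSub mem x r) ∨ ∃ w b, mem b r ∧ Tap w b x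

/-- `x ⧏∈ a`: there is `r ∈ a` with `x` found at `r`. -/
def wsFoundIn {M : Type*} (Bland : M → Prop) (mem : M → M → Prop)
    (Tap : M → M → M → Prop) (x a : M) : Prop :=
  ∃ r, wsFoundAt Bland mem Tap x r ∧ mem r a

/-- `p` is (a) `cpot a`: a bland set whose members are exactly those `x` with `x ⧏∈ a`. -/
def wsIsCpot {M : Type*} (Bland : M → Prop) (mem : M → M → Prop)
    (Tap : M → M → M → Prop) (a p : M) : Prop :=
  Bland p ∧ ∀ x, mem x p ↔ wsFoundIn Bland mem Tap x a

/-- `i` is the (bland) intersection of `a` and `h`. -/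
def wsIsInter {M : Type*} (Bland : M → Prop) (mem : M → M → Prop) (a h i : M) : Prop :=
  Bland i ∧ ∀ x, mem x i ↔ (mem x a ∧ mem x h)

/-- `h` is a wistory: bland, and every `a ∈ h` equals `cpot (a ∩ h)`. -/
def wsWistory {M : Type*} (Bland : M → Prop) (mem : M → M → Prop)
    (Tap : M → M → M → Prop) (h : M) : Prop :=
  Bland h ∧ ∀ a, mem a h → ∃ i, wsIsInter Bland mem a h i ∧ wsIsCpot Bland mem Tap i a

/-- `s` is a wevel: `s = cpot h` for some wistory `h`. -/
def wsWevel {M : Type*} (Bland : M → Prop) (mem : M → M → Prop)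
    (Tap : M → M → M → Prop) (s : M) : Prop :=
  ∃ h, wsWistory Bland mem Tap h ∧ wsIsCpot Bland mem Tap h s

/-- `p` is wand-potent: closed under `⧏∈`. -/
def wsWandPotent {M : Type*} (Bland : M → Prop) (mem : M → M → Prop)
    (Tap : M → M → M → Prop) (p : M) : Prop :=
  ∀ x, wsFoundIn Bland mem Tap x p → mem x p

/-- `a` is wand-transitive: every member of `a` is found at `a`. -/
def wsWandTransitive {M : Type*} (Bland : M → Prop) (mem : M → M → Prop)
    (Tap : M → M → M → Prop) (a : M) : Prop :=
  ∀ x, mem x a → wsFoundAt Bland mem Tap x a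

/-- `s` is `wev a`: the `∈`-least wevel at which `a` is found. -/
def wsIsWevOf {M : Type*} (Bland : M → Prop) (mem : M → M → Prop)
    (Tap : M → M → M → Prop) (a s : M) : Prop :=
  wsWevel Bland mem Tap s ∧ wsFoundAt Bland mem Tap a s ∧
    ∀ r, wsWevel Bland mem Tap r → wsFoundAt Bland mem Tap a r → ¬ mem r s

/-!
Being found at `r` is monotone in `r` along `⊆`, and it implies `⊆`: a bland set found at
`r` is a subset of it, while a tap is not bland and so has no members. Hence `⧏` is
transitive, which makes every `cpot` wand-potent. For wand-transitivity of `s = cpot h`,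
each `r ∈ h` is `cpot (r ∩ h)`, so its members are `⧏∈ h`, i.e. `r ⊆ s`; a member `a ⧏ r ∈ h`
of `s` is therefore found at `s`.
-/

section WandSets

variable {M : Type*} {Bland : M → Prop} {mem : M → M → Prop} {Tap : M → M → M → Prop}

theorem wsSub_trans {x y z : M} (hxy : wsSub mem x y) (hyz : wsSub mem y z) : wsSub mem x z :=
  fun u hu => hyz u (hxy u hu)

theorem wsFoundAt_of_wsSub {x r q : M} (hrq : wsSub mem r q)
    (hx : wsFoundAt Bland mem Tap x r) : wsFoundAt Bland mem Tap x q := by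
  rcases hx with ⟨hBx, hxr⟩ | ⟨w, b, hbr, htap⟩
  · exact Or.inl ⟨hBx, wsSub_trans hxr hrq⟩
  · exact Or.inr ⟨w, b, hrq b hbr, htap⟩

theorem wsFoundIn_of_wsSub {x a b : M} (hab : wsSub mem a b)
    (hx : wsFoundIn Bland mem Tap x a) : wsFoundIn Bland mem Tap x b :=
  let ⟨r, hxr, hra⟩ := hx
  ⟨r, hxr, hab r hra⟩

theorem wsSub_of_wsFoundAt (hInNB : ∀ x a, mem x a → Bland a)
    (hTapNB : ∀ w a c, Tap w a c → ¬ Bland c) {r q : M}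
    (hr : wsFoundAt Bland mem Tap r q) : wsSub mem r q := by
  rcases hr with ⟨-, hrq⟩ | ⟨w, b, -, htap⟩
  · exact hrq
  · exact fun y hy => absurd (hInNB y r hy) (hTapNB w b r htap)

theorem wsFoundAt_trans (hInNB : ∀ x a, mem x a → Bland a)
    (hTapNB : ∀ w a c, Tap w a c → ¬ Bland c) {x r q : M}
    (hx : wsFoundAt Bland mem Tap x r) (hr : wsFoundAt Bland mem Tap r q) :
    wsFoundAt Bland mem Tap x q :=
  wsFoundAt_of_wsSub (wsSub_of_wsFoundAt hInNB hTapNB hr) hx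

theorem wsIsCpot.wandPotent (hInNB : ∀ x a, mem x a → Bland a)
    (hTapNB : ∀ w a c, Tap w a c → ¬ Bland c) {a p : M}
    (hp : wsIsCpot Bland mem Tap a p) : wsWandPotent Bland mem Tap p := by
  rintro x ⟨r, hxr, hrp⟩
  obtain ⟨q, hrq, hqa⟩ := (hp.2 r).1 hrp
  exact (hp.2 x).2 ⟨q, wsFoundAt_trans hInNB hTapNB hxr hrq, hqa⟩

theorem wsWistory.wsSub_cpot {h s r : M} (hh : wsWistory Bland mem Tap h)
    (hs : wsIsCpot Bland mem Tap h s) (hr : mem r h) : wsSub mem r s := by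
  obtain ⟨i, ⟨-, hi⟩, -, hri⟩ := hh.2 r hr
  have hih : wsSub mem i h := fun y hy => ((hi y).1 hy).2
  exact fun y hy => (hs.2 y).2 (wsFoundIn_of_wsSub hih ((hri y).1 hy))

theorem wsWistory.cpot_wandTransitive {h s : M} (hh : wsWistory Bland mem Tap h)
    (hs : wsIsCpot Bland mem Tap h s) : wsWandTransitive Bland mem Tap s := by
  intro a has
  obtain ⟨r, har, hrh⟩ := (hs.2 a).1 has
  exact wsFoundAt_of_wsSub (hh.wsSub_cpot hs hrh) har

end WandSets

theorem wevel_potent_transitive_general {M : Type*} (Bland Wand : M → Prop) (mem : M → M → Prop)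
    (Tap : M → M → M → Prop)
    (hInNB : ∀ x a, mem x a → Bland a)
    (hTapNB : ∀ w a c, Tap w a c → Wand w ∧ ¬ Bland c) :
    ∀ s, wsWevel Bland mem Tap s →
      wsWandPotent Bland mem Tap s ∧ wsWandTransitive Bland mem Tap s := by
  rintro s ⟨h, hh, hs⟩
  exact ⟨hs.wandPotent hInNB (fun w a c htap => (hTapNB w a c htap).2),
    hh.cpot_wandTransitive hs⟩

/-- Every wevel is wand-potent and wand-transitive. -/
theorem wevel_potent_transitive {M : Type*} (Bland Wand : M → Prop) (mem : M → M → Prop)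
    (Tap : M → M → M → Prop)
    (hInNB : ∀ x a, mem x a → Bland a)
    (hTapNB : ∀ w a c, Tap w a c → Wand w ∧ ¬ Bland c)
    (hExt : ∀ a b, Bland a → Bland b → (∀ x, mem x a ↔ mem x b) → a = b)
    (hSep : ∀ (φ : M → Prop) a, Bland a → ∃ b, Bland b ∧ ∀ x, mem x b ↔ (mem x a ∧ φ x)) :
    ∀ s, wsWevel Bland mem Tap s →
      wsWandPotent Bland mem Tap s ∧ wsWandTransitive Bland mem Tap s :=
  wevel_potent_transitive_general Bland Wand mem Tap hInNB hTapNB
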